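/- For every M ∈ M_n(ℂ) there exists a unitary R ∈ U(n) such that ‖M − R‖_op ≤ ‖M*M − 1‖_op. -/

import Mathlib

/-!
Take an orthonormal eigenbasis `(uᵢ)` of `M†M`. The vectors `M uᵢ` are pairwise orthogonal, so
`M uᵢ = σᵢ bᵢ` with `σᵢ = ‖M uᵢ‖` for an orthonormal basis `(bᵢ)` (Gram–Schmidt leaves orthogonal
vectors in place up to normalisation). For the unitary `R` sending `uᵢ` to `bᵢ`,
`(M - R) uᵢ = (σᵢ - 1) bᵢ`, hence `‖M - R‖ ≤ maxᵢ |σᵢ - 1| ≤ maxᵢ |σᵢ² - 1|`, and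
`σᵢ² - 1 = re ⟪uᵢ, (M†M - 1) uᵢ⟫` is at most `‖M†M - 1‖` in absolute value.
-/

open scoped Matrix ComplexOrder

open Matrix in
/-- The Schatten `p`-norm: `(∑ σᵢ(A)^p)^(1/p)` where `σᵢ(A) = √(eigenvalues of AᴴA)`,
which equals `(Tr |A|^p)^(1/p)`. -/
noncomputable def schattenNorm {n : ℕ} (p : ℝ) (A : Matrix (Fin n) (Fin n) ℂ) : ℝ :=
  (∑ i, Real.sqrt ((Matrix.isHermitian_conjTranspose_mul_self A).eigenvalues i) ^ p) ^ (1 / p)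

/-- The operator norm of a matrix, acting on Euclidean space. -/
noncomputable def opNorm {n : ℕ} (A : Matrix (Fin n) (Fin n) ℂ) : ℝ :=
  ‖Matrix.toEuclideanCLM (𝕜 := ℂ) (n := Fin n) A‖

open scoped InnerProductSpace
open Module RCLike InnerProductSpace

lemma abs_sub_one_le_abs_sq_sub_one {x : ℝ} (hx : 0 ≤ x) : |x - 1| ≤ |x ^ 2 - 1| := by
  rw [show x ^ 2 - 1 = (x - 1) * (x + 1) by ring, abs_mul]
  exact le_mul_of_one_le_right (abs_nonneg _) (by rw [abs_of_nonneg (by linarith)]; linarith)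

variable {𝕜 E F : Type*} [RCLike 𝕜] [NormedAddCommGroup E] [InnerProductSpace 𝕜 E]
  [NormedAddCommGroup F] [InnerProductSpace 𝕜 F]

lemma norm_smul_gramSchmidtOrthonormalBasis_of_orthogonal {ι : Type*} [LinearOrder ι]
    [LocallyFiniteOrderBot ι] [WellFoundedLT ι] [Fintype ι] [FiniteDimensional 𝕜 E]
    (h : finrank 𝕜 E = Fintype.card ι) {f : ι → E} (hf : Pairwise fun i j => ⟪f i, f j⟫_𝕜 = 0)
    (i : ι) : (‖f i‖ : 𝕜) • gramSchmidtOrthonormalBasis h f i = f i := by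
  by_cases hi : f i = 0
  · simp [hi]
  · rw [gramSchmidtOrthonormalBasis_apply_of_orthogonal h hf hi, smul_smul,
      mul_inv_cancel₀ (by simpa using hi), one_smul]

lemma OrthonormalBasis.opNorm_le_of_apply_eq_smul {ι : Type*} [Fintype ι]
    (u : OrthonormalBasis ι 𝕜 E) (b : OrthonormalBasis ι 𝕜 F) {A : E →L[𝕜] F} {c : ι → 𝕜}
    (hA : ∀ i, A (u i) = c i • b i) {C : ℝ} (hC0 : 0 ≤ C) (hC : ∀ i, ‖c i‖ ≤ C) : ‖A‖ ≤ C := by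
  classical
  refine A.opNorm_le_bound hC0 fun x => ?_
  have hrepr : ∀ i, b.repr (A x) i = c i * u.repr x i := by
    intro i
    conv_lhs => rw [← u.sum_repr x]
    simp [hA, b.repr_self, Pi.single_apply, mul_comm]
  refine le_of_sq_le_sq ?_ (by positivity)
  rw [← b.repr.norm_map, mul_pow, ← u.repr.norm_map, EuclideanSpace.norm_sq_eq,
    EuclideanSpace.norm_sq_eq, Finset.mul_sum]
  refine Finset.sum_le_sum fun i _ => ?_
  rw [hrepr, norm_mul, mul_pow]
  gcongr
  exact hC i

lemma ContinuousLinearMap.abs_norm_apply_sq_sub_one_le [CompleteSpace E] (T : E →L[𝕜] E) {x : E}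
    (hx : ‖x‖ = 1) : |‖T x‖ ^ 2 - 1| ≤ ‖star T * T - 1‖ := by
  have : ‖T x‖ ^ 2 - 1 = re ⟪x, (star T * T - 1) x⟫_𝕜 := by
    rw [T.apply_norm_sq_eq_inner_adjoint_right, star_eq_adjoint]
    simp [inner_sub_right, hx]
  calc |‖T x‖ ^ 2 - 1| ≤ ‖⟪x, (star T * T - 1) x⟫_𝕜‖ := this ▸ abs_re_le_norm _
    _ ≤ ‖x‖ * ‖(star T * T - 1) x‖ := norm_inner_le_norm _ _
    _ ≤ ‖star T * T - 1‖ := by simpa [hx] using (star T * T - 1).le_opNorm x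

lemma ContinuousLinearMap.exists_orthonormalBasis_pairwise_inner_apply_eq_zero
    [FiniteDimensional 𝕜 E] [CompleteSpace F] (T : E →L[𝕜] F) :
    ∃ u : OrthonormalBasis (Fin (finrank 𝕜 E)) 𝕜 E,
      Pairwise fun i j => ⟪T (u i), T (u j)⟫_𝕜 = 0 := by
  have := FiniteDimensional.complete 𝕜 E
  have hS := T.isPositive_adjoint_comp_self.isSymmetric
  refine ⟨hS.eigenvectorBasis rfl, fun i j hij => ?_⟩
  dsimp only
  rw [← adjoint_inner_right]
  have huj := hS.apply_eigenvectorBasis rfl j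
  simp only [coe_comp, Function.comp_apply, coe_coe] at huj
  rw [huj, inner_smul_right, (hS.eigenvectorBasis rfl).orthonormal.2 hij, mul_zero]

theorem ContinuousLinearMap.exists_mem_unitary_norm_sub_le [FiniteDimensional 𝕜 E] [CompleteSpace E]
    (T : E →L[𝕜] E) : ∃ U ∈ unitary (E →L[𝕜] E), ‖T - U‖ ≤ ‖star T * T - 1‖ := by
  obtain ⟨u, hu⟩ := T.exists_orthonormalBasis_pairwise_inner_apply_eq_zero
  set b := gramSchmidtOrthonormalBasis (finrank_eq_card_basis u.toBasis) (T ∘ u)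
  have hTu : ∀ i, T (u i) = (‖T (u i)‖ : 𝕜) • b i := fun i =>
    (norm_smul_gramSchmidtOrthonormalBasis_of_orthogonal _ hu i).symm
  refine ⟨Unitary.linearIsometryEquiv.symm (u.equiv b (.refl _)), SetLike.coe_mem _, ?_⟩
  refine u.opNorm_le_of_apply_eq_smul b (c := fun i => ((‖T (u i)‖ - 1 : ℝ) : 𝕜)) (fun i => ?_)
    (norm_nonneg _) (fun i => ?_)
  · change T (u i) - u.equiv b (.refl _) (u i) = _
    rw [u.equiv_apply_basis, Equiv.refl_apply, ofReal_sub, ofReal_one, sub_smul, one_smul, ← hTu]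
  · rw [norm_ofReal]
    exact (abs_sub_one_le_abs_sq_sub_one (norm_nonneg _)).trans
      (T.abs_norm_apply_sq_sub_one_le (u.orthonormal.1 i))

theorem exists_unitary_close_opNorm {n : ℕ} (M : Matrix (Fin n) (Fin n) ℂ) :
    ∃ R ∈ Matrix.unitaryGroup (Fin n) ℂ,
      opNorm (M - R) ≤ opNorm (Mᴴ * M - 1) := by
  set e := Matrix.toEuclideanCLM (𝕜 := ℂ) (n := Fin n)
  obtain ⟨U, hU, hle⟩ := (e M).exists_mem_unitary_norm_sub_le
  refine ⟨e.symm U, Unitary.map_mem e.symm hU, ?_⟩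
  rwa [opNorm, opNorm, map_sub, map_sub, map_mul, map_one, ← Matrix.star_eq_conjTranspose,
    map_star, e.apply_symm_apply]
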